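/- Fix V̄ > 0 and α ∈ (0,1). Counted with multiplicity, the mass polynomial 𝒫_α has either no zeros in (0,∞) or exactly two. It has exactly two zeros h₁ ≤ h₂ in (0,∞) if and only if V̄ ≥ L(α); in that case, h₁ = ((1/α) − 1)^{1/4} = h₂ if V̄ = L(α), and h₁ < ((1/α) − 1)^{1/4} < h₂ if V̄ > L(α). -/

import Mathlib

open Polynomial

/-- The mass polynomial 𝒫_α as a polynomial over ℝ:
𝒫_α = α X^6 + 3α X^4 − 4V̄ X^3 + 3(1−α) X^2 + (1−α). -/
noncomputable def massP (Vbar α : ℝ) : Polynomial ℝ :=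
  C α * X ^ 6 + C (3 * α) * X ^ 4 - C (4 * Vbar) * X ^ 3 + C (3 * (1 - α)) * X ^ 2 + C (1 - α)

/-- The limiting function L(α) = α^{3/4}(1−α)^{1/4} + α^{1/4}(1−α)^{3/4}. -/
noncomputable def Lfun (α : ℝ) : ℝ :=
  α ^ ((3 : ℝ) / 4) * (1 - α) ^ ((1 : ℝ) / 4) + α ^ ((1 : ℝ) / 4) * (1 - α) ^ ((3 : ℝ) / 4)

/-! For `h > 0`, `𝒫_α(h) = 4 h³ (F_α(h) - V̄)` with `F_α = massLevel α`. The function `F_α`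
decreases strictly on `(0, h*]` and increases strictly on `[h*, ∞)`, where
`h* = (1/α - 1)^{1/4}`, and `F_α(h*) = L(α)`; it tends to `∞` at both ends. So the positive
zeros of `𝒫_α` are the solutions of `F_α(h) = V̄`: none if `V̄ < L(α)`, one on each side of `h*`
if `V̄ > L(α)`, both simple since `𝒫_α'` vanishes at a positive zero only at `h*`, and `h*`
alone if `V̄ = L(α)`, where it is a double zero. -/

noncomputable def massLevel (α h : ℝ) : ℝ :=
  (α * h ^ 6 + 3 * α * h ^ 4 + 3 * (1 - α) * h ^ 2 + (1 - α)) / (4 * h ^ 3)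

noncomputable def massCrit (α : ℝ) : ℝ := (1 / α - 1) ^ ((1 : ℝ) / 4)

namespace MassPolynomial

variable {Vbar α : ℝ}

lemma eval_massP (x : ℝ) :
    (massP Vbar α).eval x
      = α * x ^ 6 + 3 * α * x ^ 4 - 4 * Vbar * x ^ 3 + 3 * (1 - α) * x ^ 2 + (1 - α) := by
  simp [massP]

lemma eval_derivative_massP (x : ℝ) :
    (massP Vbar α).derivative.eval x
      = 6 * α * x ^ 5 + 12 * α * x ^ 3 - 12 * Vbar * x ^ 2 + 6 * (1 - α) * x := by
  simp [massP]
  ring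

lemma eval_derivative_derivative_massP (x : ℝ) :
    (massP Vbar α).derivative.derivative.eval x
      = 30 * α * x ^ 4 + 36 * α * x ^ 2 - 24 * Vbar * x + 6 * (1 - α) := by
  simp [massP]
  ring

lemma massP_ne_zero (hα : α ≠ 1) : massP Vbar α ≠ 0 := by
  intro h
  have h0 := eval_massP (Vbar := Vbar) (α := α) 0
  rw [h, eval_zero] at h0
  exact hα (by linarith)

lemma eval_massP_eq_mul_massLevel_sub {x : ℝ} (hx : x ≠ 0) :
    (massP Vbar α).eval x = 4 * x ^ 3 * (massLevel α x - Vbar) := by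
  rw [eval_massP, massLevel]
  field_simp
  ring

lemma isRoot_massP_iff {x : ℝ} (hx : 0 < x) :
    (massP Vbar α).IsRoot x ↔ massLevel α x = Vbar := by
  rw [IsRoot, eval_massP_eq_mul_massLevel_sub hx.ne', mul_eq_zero, sub_eq_zero]
  simp [hx.ne']

lemma massLevel_eq {h : ℝ} (hh : h ≠ 0) :
    massLevel α h
      = α * h ^ 3 / 4 + 3 * α * h / 4 + 3 * (1 - α) / (4 * h) + (1 - α) / (4 * h ^ 3) := by
  rw [massLevel]
  field_simp

lemma hasDerivAt_massLevel {x : ℝ} (hx : x ≠ 0) :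
    HasDerivAt (massLevel α) (3 * (x ^ 2 + 1) * (α * x ^ 4 - (1 - α)) / (4 * x ^ 4)) x := by
  have hnum : HasDerivAt (fun h ↦ α * h ^ 6 + 3 * α * h ^ 4 + 3 * (1 - α) * h ^ 2 + (1 - α))
      (α * (↑6 * x ^ 5) + 3 * α * (↑4 * x ^ 3) + 3 * (1 - α) * (↑2 * x ^ 1)) x :=
    ((((hasDerivAt_pow 6 x).const_mul α).add
    ((hasDerivAt_pow 4 x).const_mul (3 * α))).add
    ((hasDerivAt_pow 2 x).const_mul (3 * (1 - α)))).add_const (1 - α)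
  have hden := (hasDerivAt_pow 3 x).const_mul (4 : ℝ)
  refine (hnum.div hden (by positivity)).congr_deriv ?_
  field_simp
  push_cast
  ring

lemma continuousOn_massLevel : ContinuousOn (massLevel α) (Set.Ioi 0) :=
  fun _ hx ↦ (hasDerivAt_massLevel (ne_of_gt hx)).continuousAt.continuousWithinAt

lemma exists_fourth_roots (hα : α ∈ Set.Ioo 0 1) :
    ∃ A B : ℝ, 0 < A ∧ 0 < B ∧ A ^ 4 = α ∧ B ^ 4 = 1 - α ∧
      massCrit α = B / A ∧ Lfun α = A ^ 3 * B + A * B ^ 3 := by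
  obtain ⟨hα0, hα1⟩ := hα
  have h1 : 0 < 1 - α := by linarith
  refine ⟨α ^ ((1 : ℝ) / 4), (1 - α) ^ ((1 : ℝ) / 4), by positivity, by positivity,
    ?_, ?_, ?_, ?_⟩
  · rw [← Real.rpow_natCast, ← Real.rpow_mul hα0.le]; norm_num
  · rw [← Real.rpow_natCast, ← Real.rpow_mul h1.le]; norm_num
  · rw [massCrit, show 1 / α - 1 = (1 - α) / α by field_simp, Real.div_rpow h1.le hα0.le]
  · rw [Lfun, ← Real.rpow_natCast, ← Real.rpow_mul hα0.le, ← Real.rpow_natCast (_ ^ _),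
      ← Real.rpow_mul h1.le]
    norm_num

lemma massCrit_pos (hα : α ∈ Set.Ioo 0 1) : 0 < massCrit α := by
  obtain ⟨A, B, hA, hB, -, -, hcrit, -⟩ := exists_fourth_roots hα
  rw [hcrit]
  positivity

lemma mul_massCrit_pow_four (hα : α ∈ Set.Ioo 0 1) : α * massCrit α ^ 4 = 1 - α := by
  obtain ⟨A, B, hA, -, rfl, hB4, hcrit, -⟩ := exists_fourth_roots hα
  rw [hcrit, ← hB4]
  field_simp

lemma massLevel_massCrit (hα : α ∈ Set.Ioo 0 1) : massLevel α (massCrit α) = Lfun α := by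
  obtain ⟨A, B, hA, hB, rfl, hB4, hcrit, hL⟩ := exists_fourth_roots hα
  rw [hcrit, hL, massLevel, ← hB4]
  field_simp
  ring

lemma eq_massCrit_of_mul_pow_four_eq (hα : α ∈ Set.Ioo 0 1) {x : ℝ} (hx : 0 ≤ x)
    (h : α * x ^ 4 = 1 - α) : x = massCrit α := by
  rw [← mul_massCrit_pow_four hα, mul_right_inj' hα.1.ne'] at h
  exact (pow_left_inj₀ hx (massCrit_pos hα).le four_ne_zero).mp h

lemma strictAntiOn_massLevel (hα : α ∈ Set.Ioo 0 1) :
    StrictAntiOn (massLevel α) (Set.Ioc 0 (massCrit α)) := by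
  refine strictAntiOn_of_deriv_neg (convex_Ioc _ _)
    (continuousOn_massLevel.mono Set.Ioc_subset_Ioi_self) fun x hx ↦ ?_
  rw [interior_Ioc] at hx
  have hx0 := hx.1
  rw [(hasDerivAt_massLevel hx0.ne').deriv]
  have h4 := pow_lt_pow_left₀ hx.2 hx0.le four_ne_zero
  have hcrit4 := mul_massCrit_pow_four hα
  have : α * x ^ 4 < 1 - α := by nlinarith [hα.1]
  apply div_neg_of_neg_of_pos _ (by positivity)
  nlinarith [sq_nonneg x]

lemma strictMonoOn_massLevel (hα : α ∈ Set.Ioo 0 1) :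
    StrictMonoOn (massLevel α) (Set.Ici (massCrit α)) := by
  have hcrit := massCrit_pos hα
  refine strictMonoOn_of_deriv_pos (convex_Ici _)
    (continuousOn_massLevel.mono (Set.Ici_subset_Ioi.mpr hcrit)) fun x hx ↦ ?_
  rw [interior_Ici] at hx
  have hx0 : 0 < x := hcrit.trans hx
  rw [(hasDerivAt_massLevel hx0.ne').deriv]
  have h4 := pow_lt_pow_left₀ (Set.mem_Ioi.mp hx) hcrit.le four_ne_zero
  have hcrit4 := mul_massCrit_pow_four hα
  have : 1 - α < α * x ^ 4 := by nlinarith [hα.1]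
  apply div_pos _ (by positivity)
  nlinarith [sq_nonneg x]

lemma Lfun_lt_massLevel (hα : α ∈ Set.Ioo 0 1) {x : ℝ} (hx : 0 < x) (hne : x ≠ massCrit α) :
    Lfun α < massLevel α x := by
  rw [← massLevel_massCrit hα]
  rcases hne.lt_or_gt with h | h
  · exact strictAntiOn_massLevel hα ⟨hx, h.le⟩ ⟨massCrit_pos hα, le_rfl⟩ h
  · exact strictMonoOn_massLevel hα Set.self_mem_Ici h.le h

lemma Lfun_le_massLevel (hα : α ∈ Set.Ioo 0 1) {x : ℝ} (hx : 0 < x) :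
    Lfun α ≤ massLevel α x := by
  rcases eq_or_ne x (massCrit α) with rfl | hne
  · exact (massLevel_massCrit hα).ge
  · exact (Lfun_lt_massLevel hα hx hne).le

lemma exists_massLevel_eq_of_lt_massCrit (hα : α ∈ Set.Ioo 0 1) (hV : Lfun α < Vbar) :
    ∃ a, 0 < a ∧ a < massCrit α ∧ massLevel α a = Vbar := by
  obtain ⟨hα0, hα1⟩ := hα
  set s := massCrit α
  have hs := massCrit_pos ⟨hα0, hα1⟩
  -- near `0` the term `3 (1 - α) / (4 h)` of `massLevel α h` dominates
  set h₀ := min s (3 * (1 - α) / (4 * (|Vbar| + 1)))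
  have hh₀ : 0 < h₀ := lt_min hs (by have := abs_nonneg Vbar; apply div_pos <;> linarith)
  have hV₀ : Vbar ≤ massLevel α h₀ := by
    have : |Vbar| + 1 ≤ 3 * (1 - α) / (4 * h₀) := by
      rw [le_div_iff₀ (by positivity)]
      have := (le_div_iff₀ (by positivity)).mp (min_le_right s (3 * (1 - α) / (4 * (|Vbar| + 1))))
      linarith
    rw [massLevel_eq hh₀.ne']
    have : 0 ≤ (1 - α) / (4 * h₀ ^ 3) := div_nonneg (by linarith) (by positivity)
    nlinarith [le_abs_self Vbar, pow_pos hh₀ 3]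
  obtain ⟨a, ha, hVa⟩ := intermediate_value_Icc' (min_le_left _ _)
    (continuousOn_massLevel.mono fun x hx ↦ hh₀.trans_le hx.1)
    ⟨(massLevel_massCrit ⟨hα0, hα1⟩).le.trans hV.le, hV₀⟩
  refine ⟨a, hh₀.trans_le ha.1, ha.2.lt_of_ne ?_, hVa⟩
  rintro rfl
  exact hV.ne (hVa ▸ massLevel_massCrit ⟨hα0, hα1⟩).symm

lemma exists_massLevel_eq_of_massCrit_lt (hα : α ∈ Set.Ioo 0 1) (hV : Lfun α < Vbar) :
    ∃ b, massCrit α < b ∧ massLevel α b = Vbar := by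
  obtain ⟨hα0, hα1⟩ := hα
  set s := massCrit α
  have hs := massCrit_pos ⟨hα0, hα1⟩
  -- near `∞` the term `3 α h / 4` of `massLevel α h` dominates
  set h₁ := max s (4 * (|Vbar| + 1) / (3 * α))
  have hh₁ : 0 < h₁ := hs.trans_le (le_max_left _ _)
  have hV₁ : Vbar ≤ massLevel α h₁ := by
    have : |Vbar| + 1 ≤ 3 * α * h₁ / 4 := by
      have := (div_le_iff₀ (by positivity)).mp (le_max_right s (4 * (|Vbar| + 1) / (3 * α)))
      linarith
    rw [massLevel_eq hh₁.ne']
    have : 0 ≤ 3 * (1 - α) / (4 * h₁) + (1 - α) / (4 * h₁ ^ 3) :=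
      add_nonneg (div_nonneg (by linarith) (by positivity)) (div_nonneg (by linarith) (by positivity))
    nlinarith [le_abs_self Vbar, pow_pos hh₁ 3]
  obtain ⟨b, hb, hVb⟩ := intermediate_value_Icc (le_max_left _ _)
    (continuousOn_massLevel.mono fun x hx ↦ hs.trans_le hx.1)
    ⟨(massLevel_massCrit ⟨hα0, hα1⟩).le.trans hV.le, hV₁⟩
  refine ⟨b, hb.1.lt_of_ne ?_, hVb⟩
  rintro rfl
  exact hV.ne (hVb ▸ massLevel_massCrit ⟨hα0, hα1⟩).symm

lemma mul_eval_derivative_massP {x : ℝ} (hx : (massP Vbar α).IsRoot x) :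
    x * (massP Vbar α).derivative.eval x = 3 * (x ^ 2 + 1) * (α * x ^ 4 - (1 - α)) := by
  rw [IsRoot, eval_massP] at hx
  rw [eval_derivative_massP]
  linear_combination (3 : ℝ) * hx

lemma sq_mul_eval_derivative_derivative_massP {x : ℝ} (hx : (massP Vbar α).IsRoot x)
    (hcrit : α * x ^ 4 = 1 - α) :
    x ^ 2 * (massP Vbar α).derivative.derivative.eval x = 12 * (1 - α) * (x ^ 2 + 1) := by
  rw [IsRoot, eval_massP] at hx
  rw [eval_derivative_derivative_massP]
  linear_combination (6 : ℝ) * hx + (24 * x ^ 2 + 18) * hcrit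

lemma rootMultiplicity_massP_eq_one (hα : α ∈ Set.Ioo 0 1) {x : ℝ} (hx : 0 < x)
    (hroot : (massP Vbar α).IsRoot x) (hne : x ≠ massCrit α) :
    (massP Vbar α).rootMultiplicity x = 1 := by
  have hP := massP_ne_zero (Vbar := Vbar) hα.2.ne
  refine le_antisymm (not_lt.mp fun h ↦ ?_) ((rootMultiplicity_pos hP).mpr hroot)
  have hderiv := ((one_lt_rootMultiplicity_iff_isRoot hP).mp h).2
  have := mul_eval_derivative_massP hroot
  rw [hderiv.eq_zero, mul_zero, eq_comm, mul_eq_zero, sub_eq_zero] at this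
  exact hne (eq_massCrit_of_mul_pow_four_eq hα hx.le (this.resolve_left (by positivity)))

lemma rootMultiplicity_massP_massCrit (hα : α ∈ Set.Ioo 0 1) :
    (massP (Lfun α) α).rootMultiplicity (massCrit α) = 2 := by
  have hP := massP_ne_zero (Vbar := Lfun α) hα.2.ne
  have hs := massCrit_pos hα
  have hcrit := mul_massCrit_pow_four hα
  have hroot : (massP (Lfun α) α).IsRoot (massCrit α) :=
    (isRoot_massP_iff hs).mpr (massLevel_massCrit hα)
  have hderiv : (massP (Lfun α) α).derivative.IsRoot (massCrit α) := by
    have := mul_eval_derivative_massP hroot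
    rw [hcrit, sub_self, mul_zero, mul_eq_zero] at this
    exact this.resolve_left hs.ne'
  have hderiv2 : ¬ (massP (Lfun α) α).derivative.derivative.IsRoot (massCrit α) := by
    intro h
    have := sq_mul_eval_derivative_derivative_massP hroot hcrit
    rw [h.eq_zero, mul_zero] at this
    nlinarith [hα.2]
  have h1 := (one_lt_rootMultiplicity_iff_isRoot hP).mpr ⟨hroot, hderiv⟩
  have h2 : ¬ 2 < (massP (Lfun α) α).rootMultiplicity (massCrit α) :=
    fun h ↦ hderiv2 ((lt_rootMultiplicity_iff_isRoot_iterate_derivative hP).mp h 2 le_rfl)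
  omega

lemma count_positiveRoots (x : ℝ) :
    ((massP Vbar α).roots.filter (fun x ↦ 0 < x)).count x
      = if 0 < x then (massP Vbar α).rootMultiplicity x else 0 := by
  rw [Multiset.count_filter, count_roots]

lemma positiveRoots_eq_zero (hα : α ∈ Set.Ioo 0 1) (hV : Vbar < Lfun α) :
    (massP Vbar α).roots.filter (fun x ↦ 0 < x) = 0 := by
  refine Multiset.filter_eq_nil.mpr fun x hx hx0 ↦ ?_
  have hlevel := (isRoot_massP_iff hx0).mp (isRoot_of_mem_roots hx)
  exact (Lfun_le_massLevel hα hx0).not_gt (hlevel ▸ hV)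

lemma positiveRoots_massP_Lfun (hα : α ∈ Set.Ioo 0 1) :
    (massP (Lfun α) α).roots.filter (fun x ↦ 0 < x) = {massCrit α, massCrit α} := by
  ext x
  rw [count_positiveRoots]
  rcases eq_or_ne x (massCrit α) with rfl | hne
  · simp [massCrit_pos hα, rootMultiplicity_massP_massCrit hα]
  · split_ifs with hx0
    · rw [rootMultiplicity_eq_zero fun h ↦
        (Lfun_lt_massLevel hα hx0 hne).ne' ((isRoot_massP_iff hx0).mp h)]
      simp [hne]
    · simp [hne]

lemma positiveRoots_eq_pair (hα : α ∈ Set.Ioo 0 1) (hV : Lfun α < Vbar) :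
    ∃ a b, a < massCrit α ∧ massCrit α < b ∧
      (massP Vbar α).roots.filter (fun x ↦ 0 < x) = {a, b} := by
  obtain ⟨a, ha0, ha, hVa⟩ := exists_massLevel_eq_of_lt_massCrit hα hV
  obtain ⟨b, hb, hVb⟩ := exists_massLevel_eq_of_massCrit_lt hα hV
  have hb0 := (massCrit_pos hα).trans hb
  refine ⟨a, b, ha, hb, Multiset.ext.mpr fun x ↦ ?_⟩
  rw [count_positiveRoots]
  have hab : a ≠ b := (ha.trans hb).ne
  split_ifs with hx0
  · by_cases hroot : (massP Vbar α).IsRoot x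
    · have hlevel := (isRoot_massP_iff hx0).mp hroot
      rcases lt_trichotomy x (massCrit α) with hlt | rfl | hgt
      · obtain rfl : x = a := strictAntiOn_massLevel hα |>.injOn ⟨hx0, hlt.le⟩ ⟨ha0, ha.le⟩
          (hlevel.trans hVa.symm)
        simp [rootMultiplicity_massP_eq_one hα hx0 hroot hlt.ne, hab]
      · exact absurd (massLevel_massCrit hα ▸ hlevel) hV.ne
      · obtain rfl : x = b := strictMonoOn_massLevel hα |>.injOn hgt.le hb.le
          (hlevel.trans hVb.symm)
        simp [rootMultiplicity_massP_eq_one hα hx0 hroot hgt.ne', hab.symm]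
    · have hxa : x ≠ a := by rintro rfl; exact hroot ((isRoot_massP_iff ha0).mpr hVa)
      have hxb : x ≠ b := by rintro rfl; exact hroot ((isRoot_massP_iff hb0).mpr hVb)
      simp [rootMultiplicity_eq_zero hroot, hxa, hxb]
  · have hxa : x ≠ a := by rintro rfl; exact hx0 ha0
    have hxb : x ≠ b := by rintro rfl; exact hx0 hb0
    simp [hxa, hxb]

end MassPolynomial

lemma Multiset.eq_of_pair_eq_pair {α : Type*} [LinearOrder α] {a b c d : α}
    (h : ({a, b} : Multiset α) = {c, d}) (hab : a ≤ b) (hcd : c ≤ d) : a = c ∧ b = d := by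
  rcases Multiset.cons_eq_cons.mp h with ⟨hac, hbd⟩ | ⟨hac, cs, hb, hd⟩
  · exact ⟨hac, Multiset.singleton_inj.mp hbd⟩
  · have hbc : b = c := ((Multiset.singleton_eq_cons_iff cs).mp hb).1
    have hda : d = a := ((Multiset.singleton_eq_cons_iff cs).mp hd).1
    exact absurd (le_antisymm (hbc ▸ hab) (hda ▸ hcd)) hac

open MassPolynomial in
theorem stmt2_general (Vbar α : ℝ) (hα : α ∈ Set.Ioo (0 : ℝ) 1) :
    let R := (massP Vbar α).roots.filter (fun x => 0 < x)
    (Multiset.card R = 0 ∨ Multiset.card R = 2) ∧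
    (Multiset.card R = 2 ↔ Lfun α ≤ Vbar) ∧
    (∀ h₁ h₂ : ℝ, h₁ ≤ h₂ → R = {h₁, h₂} →
      (Vbar = Lfun α → h₁ = (1 / α - 1) ^ ((1 : ℝ) / 4) ∧ h₂ = (1 / α - 1) ^ ((1 : ℝ) / 4)) ∧
      (Lfun α < Vbar → h₁ < (1 / α - 1) ^ ((1 : ℝ) / 4) ∧ (1 / α - 1) ^ ((1 : ℝ) / 4) < h₂)) := by
  intro R
  rw [show (1 / α - 1) ^ ((1 : ℝ) / 4) = massCrit α from rfl]
  rcases lt_trichotomy Vbar (Lfun α) with hlt | rfl | hgt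
  · have hR : R = 0 := positiveRoots_eq_zero hα hlt
    simp [hR, hlt]
  · have hR : R = {massCrit α, massCrit α} := positiveRoots_massP_Lfun hα
    refine ⟨.inr (by simp [hR]), by simp [hR], fun h₁ h₂ h12 hR' ↦ ?_⟩
    obtain ⟨rfl, rfl⟩ := Multiset.eq_of_pair_eq_pair (hR'.symm.trans hR) h12 le_rfl
    simp
  · obtain ⟨a, b, ha, hb, hR⟩ := positiveRoots_eq_pair hα hgt
    change R = _ at hR
    refine ⟨.inr (by simp [hR]), by simp [hR, hgt.le], fun h₁ h₂ h12 hR' ↦ ?_⟩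
    obtain ⟨rfl, rfl⟩ := Multiset.eq_of_pair_eq_pair (hR'.symm.trans hR) h12 (ha.trans hb).le
    exact ⟨fun h ↦ absurd h hgt.ne', fun _ ↦ ⟨ha, hb⟩⟩

theorem stmt2 (Vbar α : ℝ) (hV : 0 < Vbar) (hα : α ∈ Set.Ioo (0 : ℝ) 1) :
    let R := (massP Vbar α).roots.filter (fun x => 0 < x)
    (Multiset.card R = 0 ∨ Multiset.card R = 2) ∧
    (Multiset.card R = 2 ↔ Lfun α ≤ Vbar) ∧
    (∀ h₁ h₂ : ℝ, h₁ ≤ h₂ → R = {h₁, h₂} →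
      (Vbar = Lfun α → h₁ = (1 / α - 1) ^ ((1 : ℝ) / 4) ∧ h₂ = (1 / α - 1) ^ ((1 : ℝ) / 4)) ∧
      (Lfun α < Vbar → h₁ < (1 / α - 1) ^ ((1 : ℝ) / 4) ∧ (1 / α - 1) ^ ((1 : ℝ) / 4) < h₂)) :=
  stmt2_general Vbar α hα
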